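/- arXiv:0709.4495 — 6 statements merged into one kernel-verified Lean document; each statement's English description precedes it below -/
import Mathlib

section
/- If σ₁ and σ₂ are clusters in a normal contact algebra (B,C) and σ₁ ⊆ σ₂, then σ₁ = σ₂. -/
variable {B : Type*} [BooleanAlgebra B]

/-- A contact relation on a Boolean algebra: axioms (C1)-(C4). -/
def IsContactRel (C : B → B → Prop) : Prop :=
  (∀ a, a ≠ ⊥ → C a a) ∧
  (∀ a b, C a b → a ≠ ⊥ ∧ b ≠ ⊥) ∧
  (∀ a b, C a b → C b a) ∧
  (∀ a b c, C a (b ⊔ c) ↔ C a b ∨ C a c)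

/-- A normal contact relation: additionally axioms (C5) and (C6). -/
def IsNormalContactRel (C : B → B → Prop) : Prop :=
  IsContactRel C ∧
  (∀ a b, ¬ C a b → ∃ c, ¬ C a c ∧ ¬ C b cᶜ) ∧
  (∀ a, a ≠ ⊤ → ∃ b, b ≠ ⊥ ∧ ¬ C b a)

/-- A cluster in a contact algebra: axioms (K1)-(K3). -/
def IsCluster (C : B → B → Prop) (σ : Set B) : Prop :=
  σ.Nonempty ∧
  (∀ a ∈ σ, ∀ b ∈ σ, C a b) ∧
  (∀ a b, a ⊔ b ∈ σ → a ∈ σ ∨ b ∈ σ) ∧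
  (∀ a, (∀ b ∈ σ, C a b) → a ∈ σ)

/-- An ultrafilter in a Boolean algebra, as a set. -/
def IsUltrafilterSet (u : Set B) : Prop :=
  ⊤ ∈ u ∧ ⊥ ∉ u ∧
  (∀ a b, a ∈ u → a ≤ b → b ∈ u) ∧
  (∀ a b, a ∈ u → b ∈ u → a ⊓ b ∈ u) ∧
  (∀ a : B, a ∈ u ∨ aᶜ ∈ u)

/-- If two clusters in a normal contact algebra are comparable by inclusion,
they are equal. -/
theorem cluster_subset_eq (C : B → B → Prop) (hC : IsNormalContactRel C)
    (σ₁ σ₂ : Set B) (h₁ : IsCluster C σ₁) (h₂ : IsCluster C σ₂)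
    (hsub : σ₁ ⊆ σ₂) : σ₁ = σ₂ := by
  apply Set.Subset.antisymm hsub
  intro a ha
  exact h₁.2.2.2 a (fun b hb => h₂.2.1 a ha b (hsub hb))
end

section
/- A subset σ of a normal contact algebra (B,C) is a cluster if and only if there exists an ultrafilter u in B such that σ = {a ∈ B | aCb for every b ∈ u}. Moreover, given a cluster σ and a₀ ∈ σ, the ultrafilter u can be chosen to contain a₀. -/
variable {B : Type*} [BooleanAlgebra B]

/-!
A cluster `σ` is an upper set whose complement is closed under joins, so `σᶜ` is an order ideal,
disjoint from the principal filter of any `a₀ ∈ σ`. The prime ideal theorem separates the two by a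
prime ideal, whose complement is an ultrafilter `u` with `a₀ ∈ u ⊆ σ`. By (C5) and `c ∈ u ∨ cᶜ ∈ u`,
two elements in contact with every member of `u` are in contact with each other. Hence an `a` in
contact with all of `u` is in contact with all of `σ`, so `a ∈ σ` by (K3): `σ` is the set of
elements in contact with all of `u`. The same fact gives (K1) for any set of this form, and (K2)
follows from (C4) applied to meets of elements of `u`.
-/

section Contact

variable {C : B → B → Prop} {σ u : Set B} {a b c : B}

namespace IsContactRel

lemma symm (hC : IsContactRel C) (h : C a b) : C b a := hC.2.2.1 a b h

lemma sup_left (hC : IsContactRel C) : C (a ⊔ b) c ↔ C a c ∨ C b c := by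
  constructor
  · intro h
    exact ((hC.2.2.2 c a b).1 (hC.symm h)).imp hC.symm hC.symm
  · intro h
    exact hC.symm ((hC.2.2.2 c a b).2 (h.imp hC.symm hC.symm))

lemma mono_right (hC : IsContactRel C) (h : C a b) (hbc : b ≤ c) : C a c := by
  simpa only [sup_eq_right.mpr hbc] using (hC.2.2.2 a b c).2 (Or.inl h)

lemma mono_left (hC : IsContactRel C) (h : C a b) (hac : a ≤ c) : C c b :=
  hC.symm (hC.mono_right (hC.symm h) hac)

end IsContactRel

lemma isUltrafilterSet_compl_of_isPrime {J : Order.Ideal B} (hJ : J.IsPrime) :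
    IsUltrafilterSet (J : Set B)ᶜ :=
  ⟨Order.Ideal.isProper_iff_top_notMem.1 hJ.toIsProper, not_not.2 J.bot_mem,
    fun _ _ ha hab => Order.Ideal.mem_compl_of_ge hab ha,
    fun _ _ ha hb h => (hJ.mem_or_mem h).elim ha hb,
    fun _ => hJ.toIsProper.notMem_or_compl_notMem⟩

lemma IsUltrafilterSet.contact (hC : IsContactRel C) (hu : IsUltrafilterSet u)
    (ha : a ∈ u) (hb : b ∈ u) : C a b := by
  obtain ⟨-, hbot, -, hinf, -⟩ := hu
  have hab : a ⊓ b ∈ u := hinf a b ha hb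
  have hself : C (a ⊓ b) (a ⊓ b) := hC.1 _ fun h => hbot (h ▸ hab)
  exact hC.mono_left (hC.mono_right hself inf_le_right) inf_le_left

lemma IsUltrafilterSet.contact_of_forall_contact
    (hC5 : ∀ a b, ¬ C a b → ∃ c, ¬ C a c ∧ ¬ C b cᶜ) (hu : IsUltrafilterSet u)
    (ha : ∀ c ∈ u, C a c) (hb : ∀ c ∈ u, C b c) : C a b := by
  by_contra hab
  obtain ⟨c, hac, hbc⟩ := hC5 a b hab
  rcases hu.2.2.2.2 c with hc | hc
  · exact hac (ha c hc)
  · exact hbc (hb cᶜ hc)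

lemma isCluster_setOf_forall_contact (hC : IsContactRel C)
    (hC5 : ∀ a b, ¬ C a b → ∃ c, ¬ C a c ∧ ¬ C b cᶜ) (hu : IsUltrafilterSet u) :
    IsCluster C {a | ∀ b ∈ u, C a b} := by
  have hsub : u ⊆ {a | ∀ b ∈ u, C a b} := fun a ha b hb => hu.contact hC ha hb
  refine ⟨⟨⊤, hsub hu.1⟩, fun a ha b hb => hu.contact_of_forall_contact hC5 ha hb, ?_,
    fun a ha b hb => ha b (hsub hb)⟩
  intro a b hab
  by_contra! h
  simp only [Set.mem_ofPred_eq, not_forall] at h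
  obtain ⟨⟨c, hc, hac⟩, ⟨d, hd, hbd⟩⟩ := h
  rcases hC.sup_left.1 (hab (c ⊓ d) (hu.2.2.2.1 c d hc hd)) with h | h
  · exact hac (hC.mono_right h inf_le_left)
  · exact hbd (hC.mono_right h inf_le_right)

namespace IsCluster

lemma bot_notMem (hC : IsContactRel C) (hσ : IsCluster C σ) : ⊥ ∉ σ := fun h =>
  (hC.2.1 ⊥ ⊥ (hσ.2.1 ⊥ h ⊥ h)).1 rfl

lemma isUpperSet (hC : IsContactRel C) (hσ : IsCluster C σ) : IsUpperSet σ :=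
  fun a b hab ha => hσ.2.2.2 b fun c hc => hC.mono_left (hσ.2.1 a ha c hc) hab

lemma isIdeal_compl (hC : IsContactRel C) (hσ : IsCluster C σ) : Order.IsIdeal σᶜ where
  IsLowerSet := (hσ.isUpperSet hC).compl
  Nonempty := ⟨⊥, hσ.bot_notMem hC⟩
  Directed a ha b hb :=
    ⟨a ⊔ b, fun h => (hσ.2.2.1 a b h).elim ha hb, le_sup_left, le_sup_right⟩

lemma exists_ultrafilterSet_mem_subset (hC : IsContactRel C) (hσ : IsCluster C σ) {a₀ : B}
    (ha₀ : a₀ ∈ σ) : ∃ u : Set B, IsUltrafilterSet u ∧ a₀ ∈ u ∧ u ⊆ σ := by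
  have hdisj : Disjoint (Order.PFilter.principal a₀ : Set B) (hσ.isIdeal_compl hC).toIdeal :=
    Set.disjoint_left.2 fun _ hx hxσ => hxσ (hσ.isUpperSet hC hx ha₀)
  obtain ⟨J, hJ, hσJ, hJa₀⟩ := DistribLattice.prime_ideal_of_disjoint_filter_ideal hdisj
  exact ⟨(J : Set B)ᶜ, isUltrafilterSet_compl_of_isPrime hJ,
    Set.disjoint_left.1 hJa₀ (Order.PFilter.mem_principal.2 le_rfl),
    fun _ hb => by_contra fun hbσ => hb (hσJ hbσ)⟩

lemma eq_setOf_forall_contact (hC5 : ∀ a b, ¬ C a b → ∃ c, ¬ C a c ∧ ¬ C b cᶜ)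
    (hσ : IsCluster C σ) (hu : IsUltrafilterSet u) (huσ : u ⊆ σ) :
    σ = {a | ∀ b ∈ u, C a b} := by
  ext a
  refine ⟨fun ha b hb => hσ.2.1 a ha b (huσ hb), fun ha => hσ.2.2.2 a fun b hb => ?_⟩
  exact hu.contact_of_forall_contact hC5 ha fun c hc => hσ.2.1 b hb c (huσ hc)

end IsCluster

end Contact

/-- A subset of a normal contact algebra is a cluster iff it arises from an
ultrafilter as in (1); moreover the ultrafilter can be chosen through any
given element of the cluster. -/
theorem cluster_iff_ultrafilter (C : B → B → Prop) (hC : IsNormalContactRel C) :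
    (∀ σ : Set B, IsCluster C σ ↔
      ∃ u : Set B, IsUltrafilterSet u ∧ σ = {a : B | ∀ b ∈ u, C a b}) ∧
    (∀ σ : Set B, IsCluster C σ → ∀ a₀ ∈ σ,
      ∃ u : Set B, IsUltrafilterSet u ∧ a₀ ∈ u ∧
        σ = {a : B | ∀ b ∈ u, C a b}) := by
  obtain ⟨hC, hC5, -⟩ := hC
  have through : ∀ σ : Set B, IsCluster C σ → ∀ a₀ ∈ σ,
      ∃ u : Set B, IsUltrafilterSet u ∧ a₀ ∈ u ∧ σ = {a : B | ∀ b ∈ u, C a b} := by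
    intro σ hσ a₀ ha₀
    obtain ⟨u, hu, ha₀u, huσ⟩ := hσ.exists_ultrafilterSet_mem_subset hC ha₀
    exact ⟨u, hu, ha₀u, hσ.eq_setOf_forall_contact hC5 hu huσ⟩
  refine ⟨fun σ => ⟨fun hσ => ?_, ?_⟩, through⟩
  · obtain ⟨a₀, ha₀⟩ := hσ.1
    obtain ⟨u, hu, -, hσu⟩ := through σ hσ a₀ ha₀
    exact ⟨u, hu, hσu⟩
  · rintro ⟨u, hu, rfl⟩
    exact isCluster_setOf_forall_contact hC hC5 hu
end

section
/- Let (B,C) be a normal contact algebra and u an ultrafilter in B. Then there exists a unique cluster σ_u in (B,C) containing u, and σ_u = {a ∈ B | aCb for every b ∈ u}. -/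
variable {B : Type*} [BooleanAlgebra B]

/-!
The normality axiom (C5) does all the work: if `¬ a C b`, it gives `c` with `¬ a C c` and
`¬ b C cᶜ`, and since `c` or `cᶜ` lies in `u`, one of `a`, `b` is not in contact with all of
`u`. Hence any two elements of `σ_u` are in contact, and for a cluster `σ ⊇ u`, (K1) gives
`σ ⊆ σ_u` while (K3) gives `σ_u ⊆ σ`.
-/

/-- The set `σ_u` of the paper. -/
def clusterOf {α : Type*} (C : α → α → Prop) (u : Set α) : Set α :=
  {a | ∀ b ∈ u, C a b}

theorem mem_clusterOf {α : Type*} {C : α → α → Prop} {u : Set α} {a : α} :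
    a ∈ clusterOf C u ↔ ∀ b ∈ u, C a b :=
  Iff.rfl

section ContactAlgebra

variable {C : B → B → Prop} {a a' b b' : B} {u σ : Set B}

theorem IsContactRel.symm_s2 (hC : IsContactRel C) (h : C a b) : C b a :=
  hC.2.2.1 a b h

theorem IsContactRel.mono_right_s2 (hC : IsContactRel C) (h : C a b) (hb : b ≤ b') : C a b' := by
  simpa only [sup_eq_right.2 hb] using (hC.2.2.2 a b b').2 (Or.inl h)

theorem IsContactRel.mono_left_s2 (hC : IsContactRel C) (h : C a b) (ha : a ≤ a') : C a' b :=
  hC.symm_s2 (hC.mono_right_s2 (hC.symm_s2 h) ha)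

theorem IsContactRel.of_inf_ne_bot (hC : IsContactRel C) (h : a ⊓ b ≠ ⊥) : C a b :=
  hC.mono_left_s2 (hC.mono_right_s2 (hC.1 _ h) inf_le_right) inf_le_left

theorem IsContactRel.sup_left_iff (hC : IsContactRel C) : C (a ⊔ a') b ↔ C a b ∨ C a' b :=
  ⟨fun h => ((hC.2.2.2 b a a').1 (hC.symm_s2 h)).imp hC.symm_s2 hC.symm_s2,
    fun h => h.elim (fun h => hC.mono_left_s2 h le_sup_left) (fun h => hC.mono_left_s2 h le_sup_right)⟩

theorem IsUltrafilterSet.inf_ne_bot (hu : IsUltrafilterSet u) (ha : a ∈ u) (hb : b ∈ u) :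
    a ⊓ b ≠ ⊥ :=
  fun h => hu.2.1 (h ▸ hu.2.2.2.1 a b ha hb)

theorem subset_clusterOf (hC : IsContactRel C) (hu : IsUltrafilterSet u) : u ⊆ clusterOf C u :=
  fun _ ha _ hb => hC.of_inf_ne_bot (hu.inf_ne_bot ha hb)

theorem IsNormalContactRel.contact_of_mem_clusterOf (hC : IsNormalContactRel C)
    (hu : IsUltrafilterSet u) (ha : a ∈ clusterOf C u) (hb : b ∈ clusterOf C u) : C a b := by
  by_contra hab
  obtain ⟨c, hac, hbc⟩ := hC.2.1 a b hab
  rcases hu.2.2.2.2 c with hc | hc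
  · exact hac (ha c hc)
  · exact hbc (hb cᶜ hc)

theorem sup_mem_clusterOf (hC : IsContactRel C) (hu : IsUltrafilterSet u)
    (h : a ⊔ a' ∈ clusterOf C u) : a ∈ clusterOf C u ∨ a' ∈ clusterOf C u := by
  by_contra! hnot
  obtain ⟨⟨b, hb, hab⟩, ⟨b', hb', hab'⟩⟩ : (∃ b ∈ u, ¬ C a b) ∧ ∃ b' ∈ u, ¬ C a' b' := by
    simpa only [mem_clusterOf, not_forall, exists_prop] using hnot
  rcases hC.sup_left_iff.1 (h _ (hu.2.2.2.1 b b' hb hb')) with hc | hc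
  · exact hab (hC.mono_right_s2 hc inf_le_left)
  · exact hab' (hC.mono_right_s2 hc inf_le_right)

theorem isCluster_clusterOf (hC : IsNormalContactRel C) (hu : IsUltrafilterSet u) :
    IsCluster C (clusterOf C u) :=
  ⟨⟨⊤, subset_clusterOf hC.1 hu hu.1⟩,
    fun _ ha _ hb => hC.contact_of_mem_clusterOf hu ha hb,
    fun _ _ h => sup_mem_clusterOf hC.1 hu h,
    fun _ ha _ hb => ha _ (subset_clusterOf hC.1 hu hb)⟩

theorem IsCluster.subset_clusterOf (hσ : IsCluster C σ) (huσ : u ⊆ σ) : σ ⊆ clusterOf C u :=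
  fun _ ha _ hb => hσ.2.1 _ ha _ (huσ hb)

theorem IsCluster.eq_clusterOf (hC : IsNormalContactRel C) (hu : IsUltrafilterSet u)
    (hσ : IsCluster C σ) (huσ : u ⊆ σ) : σ = clusterOf C u := by
  refine (hσ.subset_clusterOf huσ).antisymm fun a ha => hσ.2.2.2 a fun b hb => ?_
  exact hC.contact_of_mem_clusterOf hu ha (hσ.subset_clusterOf huσ hb)

end ContactAlgebra

/-- Every ultrafilter in a normal contact algebra is contained in a unique
cluster, namely σ_u = {a | aCb for all b ∈ u}. -/
theorem unique_cluster_containing_ultrafilter (C : B → B → Prop)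
    (hC : IsNormalContactRel C) (u : Set B) (hu : IsUltrafilterSet u) :
    IsCluster C {a : B | ∀ b ∈ u, C a b} ∧
    u ⊆ {a : B | ∀ b ∈ u, C a b} ∧
    (∀ σ : Set B, IsCluster C σ → u ⊆ σ → σ = {a : B | ∀ b ∈ u, C a b}) :=
  ⟨isCluster_clusterOf hC hu, subset_clusterOf hC.1 hu,
    fun _ hσ huσ => hσ.eq_clusterOf hC hu huσ⟩
end

section
/- Let (B,C) be a normal contact algebra, σ a cluster in (B,C), and a ∈ B with a ∉ σ. Then there exists b ∈ B with b ∉ σ and a ≪ b (i.e., ¬(a C b*)). -/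
variable {B : Type*} [BooleanAlgebra B]

namespace IsCluster

variable {C : B → B → Prop} {σ : Set B}

theorem exists_mem_not_contact (hσ : IsCluster C σ) {a : B} (ha : a ∉ σ) :
    ∃ b ∈ σ, ¬ C a b := by
  by_contra! h
  exact ha (hσ.2.2.2 a h)

theorem not_mem_of_not_contact (hσ : IsCluster C σ) {b d : B} (hb : b ∈ σ) (hbd : ¬ C b d) :
    d ∉ σ :=
  fun hd => hbd (hσ.2.1 b hb d hd)

end IsCluster

/-- If a is not in the cluster σ, then some b ∉ σ non-tangentially contains a. -/
theorem exists_not_mem_cluster_ll (C : B → B → Prop)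
    (hC : IsNormalContactRel C) (σ : Set B) (hσ : IsCluster C σ)
    (a : B) (ha : a ∉ σ) :
    ∃ b : B, b ∉ σ ∧ ¬ C a bᶜ := by
  obtain ⟨b₀, hb₀, hab₀⟩ := hσ.exists_mem_not_contact ha
  obtain ⟨c, hac, hb₀c⟩ := hC.2.1 a b₀ hab₀
  exact ⟨cᶜ, hσ.not_mem_of_not_contact hb₀ hb₀c, by rwa [compl_compl]⟩
end

section
/- For a topological space X, the standard contact algebra (RC(X), ρ_X), where F ρ_X G iff F ∩ G ≠ ∅, is connected (i.e., satisfies: F ≠ ∅ and F ≠ X imply F ρ_X F*) if and only if the space X is connected. -/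
open Set

/-- A set is regular closed if it equals the closure of its interior. -/
def IsRegularClosed {X : Type*} [TopologicalSpace X] (F : Set X) : Prop :=
  closure (interior F) = F

section

variable {X : Type*} [TopologicalSpace X] {F : Set X}

lemma IsRegularClosed.isClosed (h : IsRegularClosed F) : IsClosed F :=
  h ▸ isClosed_closure

lemma IsClopen.isRegularClosed (h : IsClopen F) : IsRegularClosed F := by
  rw [IsRegularClosed, h.isOpen.interior_eq, h.isClosed.closure_eq]

lemma inter_closure_compl_nonempty_iff_not_isOpen :
    (F ∩ closure Fᶜ).Nonempty ↔ ¬IsOpen F := by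
  rw [closure_compl, ← subset_interior_iff_isOpen, ← sdiff_eq, sdiff_nonempty]

end

/-- The standard contact algebra (RC(X), ρ_X) is connected iff the space X is
connected (i.e. cannot be split into two nonempty disjoint open sets). -/
theorem rc_connected_iff (X : Type*) [TopologicalSpace X] :
    (∀ F : Set X, IsRegularClosed F → F ≠ ∅ → F ≠ univ →
      (F ∩ closure Fᶜ).Nonempty) ↔ PreconnectedSpace X := by
  rw [preconnectedSpace_iff_clopen]
  refine ⟨fun h F hF => ?_, fun h F hF hne hnu => ?_⟩
  · by_contra! hproper
    exact inter_closure_compl_nonempty_iff_not_isOpen.mp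
      (h F hF.isRegularClosed hproper.1.ne_empty hproper.2) hF.isOpen
  · exact inter_closure_compl_nonempty_iff_not_isOpen.mpr fun hopen =>
      (h F ⟨hF.isClosed, hopen⟩).elim hne hnu
end

section
/- If X is a regular topological space and x ∈ X, then σ_x = {F ∈ RC(X) | x ∈ F} is a cluster in the contact algebra (RC(X), ρ_X). -/
open Set

/-- A cluster in the standard contact algebra (RC(X), ρ_X), expressed via
regular closed subsets of X: (K1)-(K3) plus nonemptiness. -/
def IsRCCluster (X : Type*) [TopologicalSpace X] (σ : Set (Set X)) : Prop :=
  (∀ F ∈ σ, IsRegularClosed F) ∧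
  σ.Nonempty ∧
  (∀ F ∈ σ, ∀ G ∈ σ, (F ∩ G).Nonempty) ∧
  (∀ F G : Set X, IsRegularClosed F → IsRegularClosed G →
    F ∪ G ∈ σ → F ∈ σ ∨ G ∈ σ) ∧
  (∀ F : Set X, IsRegularClosed F → (∀ G ∈ σ, (F ∩ G).Nonempty) → F ∈ σ)

/- Only (K3) needs regularity: a point outside a closed set `F` has a closed neighbourhood
missing `F`, and the closure of its interior is a regular closed set through the point that
does not meet `F`. -/

section

variable {X : Type*} [TopologicalSpace X]

theorem isRegularClosed_univ : IsRegularClosed (univ : Set X) := by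
  simp [IsRegularClosed]

theorem isRegularClosed_closure_interior (s : Set X) :
    IsRegularClosed (closure (interior s)) :=
  closure_interior_idem

theorem IsRegularClosed.isClosed_s9 {F : Set X} (hF : IsRegularClosed F) : IsClosed F :=
  hF ▸ isClosed_closure

theorem exists_isRegularClosed_mem_disjoint [RegularSpace X] {F : Set X} {x : X}
    (hF : IsClosed F) (hx : x ∉ F) :
    ∃ G, IsRegularClosed G ∧ x ∈ G ∧ Disjoint F G := by
  obtain ⟨C, ⟨hC, hC_closed⟩, hCF⟩ :=
    (closed_nhds_basis x).mem_iff.mp (hF.isOpen_compl.mem_nhds hx)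
  refine ⟨closure (interior C), isRegularClosed_closure_interior C,
    subset_closure (mem_interior_iff_mem_nhds.mpr hC), ?_⟩
  exact disjoint_compl_right.mono_right (hC_closed.closure_interior_subset.trans hCF)

end

/-- In a regular space, σ_x = {F ∈ RC(X) | x ∈ F} is a cluster of the
standard contact algebra. -/
theorem sigma_x_isCluster (X : Type*) [TopologicalSpace X] [RegularSpace X]
    (x : X) :
    IsRCCluster X {F : Set X | IsRegularClosed F ∧ x ∈ F} := by
  refine ⟨fun F hF => hF.1, ⟨univ, isRegularClosed_univ, mem_univ x⟩, ?_, ?_, ?_⟩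
  · rintro F ⟨-, hxF⟩ G ⟨-, hxG⟩
    exact ⟨x, hxF, hxG⟩
  · rintro F G hF hG ⟨-, hxF | hxG⟩
    · exact Or.inl ⟨hF, hxF⟩
    · exact Or.inr ⟨hG, hxG⟩
  · intro F hF hmeet
    refine ⟨hF, by_contra fun hx => ?_⟩
    obtain ⟨G, hG, hxG, hFG⟩ := exists_isRegularClosed_mem_disjoint hF.isClosed_s9 hx
    exact (hmeet G ⟨hG, hxG⟩).not_disjoint hFG
end
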